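/- Let h^{(j)} : ℝ → ℝ be L_K-Lipschitz for j = 1,…,d, and define for r-term CP tensors X₁ = ∑_k ⊗_j x_{1,k}^{(j)} and X₂ = ∑_l ⊗_j x_{2,l}^{(j)} the kernel K(X₁,X₂) = ∑_{k,l=1}^r ∏_{j=1}^d h^{(j)}(‖x_{1,k}^{(j)} − x_{2,l}^{(j)}‖²). Suppose linear maps A^{(j)} satisfy | ‖A^{(j)}u − A^{(j)}v‖² − ‖u − v‖² | ≤ ε‖u − v‖² for all relevant component pairs (u,v), where ε ∈ (0,1), and all components satisfy ‖x_{i,k}^{(j)}‖ ≤ B. If additionally |h^{(j)}| ≤ M with M ≥ 1 and L_K ≤ M, then |K(A∘X₁, A∘X₂) − K(X₁,X₂)| ≤ r²·d·M^{d−1}·L_K·ε·4B². -/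
import Mathlib

lemma prod_diff_le {ι : Type*} (s : Finset ι) (f g : ι → ℝ) (M : ℝ) (hM : 1 ≤ M)
    (hf : ∀ j ∈ s, |f j| ≤ M) (hg : ∀ j ∈ s, |g j| ≤ M) :
    |∏ j ∈ s, f j - ∏ j ∈ s, g j| ≤ M ^ (s.card - 1) * ∑ j ∈ s, |f j - g j| := by
  classical
  induction s using Finset.induction_on with
  | empty => simp
  | @insert a s ha ih =>
    have hM0 : (0:ℝ) ≤ M := le_trans zero_le_one hM
    rw [Finset.prod_insert ha, Finset.prod_insert ha, Finset.sum_insert ha]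
    have key : f a * ∏ j ∈ s, f j - g a * ∏ j ∈ s, g j
        = (f a - g a) * ∏ j ∈ s, f j + g a * (∏ j ∈ s, f j - ∏ j ∈ s, g j) := by ring
    have hfs : |∏ j ∈ s, f j| ≤ M ^ s.card := by
      rw [Finset.abs_prod]
      calc ∏ j ∈ s, |f j| ≤ ∏ j ∈ s, M :=
            Finset.prod_le_prod (fun j _ => abs_nonneg _)
              (fun j hj => hf j (Finset.mem_insert_of_mem hj))
        _ = M ^ s.card := by rw [Finset.prod_const]
    have ih' := ih (fun j hj => hf j (Finset.mem_insert_of_mem hj))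
      (fun j hj => hg j (Finset.mem_insert_of_mem hj))
    have hcard : (insert a s).card - 1 = s.card := by
      rw [Finset.card_insert_of_notMem ha]; omega
    rw [hcard, key]
    have hga : |g a| ≤ M := hg a (Finset.mem_insert_self a s)
    calc |(f a - g a) * ∏ j ∈ s, f j + g a * (∏ j ∈ s, f j - ∏ j ∈ s, g j)|
        ≤ |(f a - g a) * ∏ j ∈ s, f j| + |g a * (∏ j ∈ s, f j - ∏ j ∈ s, g j)| :=
          abs_add_le _ _
      _ = |f a - g a| * |∏ j ∈ s, f j| + |g a| * |∏ j ∈ s, f j - ∏ j ∈ s, g j| := by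
          rw [abs_mul, abs_mul]
      _ ≤ |f a - g a| * M ^ s.card + M * (M ^ (s.card - 1) * ∑ j ∈ s, |f j - g j|) := by
          have t1 : |f a - g a| * |∏ j ∈ s, f j| ≤ |f a - g a| * M ^ s.card :=
            mul_le_mul_of_nonneg_left hfs (abs_nonneg _)
          have t2 : |g a| * |∏ j ∈ s, f j - ∏ j ∈ s, g j|
              ≤ M * (M ^ (s.card - 1) * ∑ j ∈ s, |f j - g j|) :=
            mul_le_mul hga ih' (abs_nonneg _) hM0
          linarith
      _ ≤ M ^ s.card * (|f a - g a| + ∑ j ∈ s, |f j - g j|) := by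
          rcases Finset.eq_empty_or_nonempty s with rfl | hs
          · simp [mul_comm]
          · have h1 : M * M ^ (s.card - 1) ≤ M ^ s.card := by
              rw [← pow_succ']
              exact pow_le_pow_right₀ hM (by have := Finset.card_pos.mpr hs; omega)
            have h2 : (0:ℝ) ≤ ∑ j ∈ s, |f j - g j| :=
              Finset.sum_nonneg fun j _ => abs_nonneg _
            have h3 : M * (M ^ (s.card - 1) * ∑ j ∈ s, |f j - g j|)
                ≤ M ^ s.card * ∑ j ∈ s, |f j - g j| := by
              rw [← mul_assoc]
              exact mul_le_mul_of_nonneg_right h1 h2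
            nlinarith [abs_nonneg (f a - g a)]

/-- perturbation bound for the CP tensor kernel under random
projections that approximately preserve squared distances. -/
theorem stmt_5 (r d : ℕ) (hr : 0 < r) (hd : 0 < d)
    {E F : Fin d → Type*}
    [∀ j, NormedAddCommGroup (E j)] [∀ j, NormedSpace ℝ (E j)]
    [∀ j, NormedAddCommGroup (F j)] [∀ j, NormedSpace ℝ (F j)]
    (h : Fin d → ℝ → ℝ) (LK M B ε : ℝ)
    (hLK : 0 ≤ LK) (hM : 1 ≤ M) (hLKM : LK ≤ M) (hB : 0 < B)
    (hε : 0 < ε) (hε1 : ε < 1)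
    (hLip : ∀ j s t, |h j s - h j t| ≤ LK * |s - t|)
    (hbdd : ∀ j t, |h j t| ≤ M)
    (A : ∀ j, E j →ₗ[ℝ] F j)
    (x₁ x₂ : Fin r → ∀ j, E j)
    (hcomp : ∀ i ∈ ({x₁, x₂} : Set (Fin r → ∀ j, E j)), ∀ k j, ‖i k j‖ ≤ B)
    (hproj : ∀ j k l,
      |‖A j (x₁ k j) - A j (x₂ l j)‖ ^ 2 - ‖x₁ k j - x₂ l j‖ ^ 2| ≤
        ε * ‖x₁ k j - x₂ l j‖ ^ 2) :
    |(∑ k : Fin r, ∑ l : Fin r, ∏ j, h j (‖A j (x₁ k j) - A j (x₂ l j)‖ ^ 2)) -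
      ∑ k : Fin r, ∑ l : Fin r, ∏ j, h j (‖x₁ k j - x₂ l j‖ ^ 2)| ≤
      (r : ℝ) ^ 2 * d * M ^ (d - 1) * LK * ε * (4 * B ^ 2) := by
  have h1 : ∀ k j, ‖x₁ k j‖ ≤ B := hcomp x₁ (Or.inl rfl)
  have h2 : ∀ k j, ‖x₂ k j‖ ≤ B := hcomp x₂ (Or.inr rfl)
  have hMd : (0:ℝ) ≤ M ^ (d - 1) := pow_nonneg (by linarith) _
  set C : ℝ := (d : ℝ) * M ^ (d - 1) * LK * ε * (4 * B ^ 2) with hC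
  have term_bound : ∀ k l : Fin r,
      |(∏ j, h j (‖A j (x₁ k j) - A j (x₂ l j)‖ ^ 2)) -
        ∏ j, h j (‖x₁ k j - x₂ l j‖ ^ 2)| ≤ C := by
    intro k l
    have hprod := prod_diff_le Finset.univ
      (fun j => h j (‖A j (x₁ k j) - A j (x₂ l j)‖ ^ 2))
      (fun j => h j (‖x₁ k j - x₂ l j‖ ^ 2)) M hM
      (fun j _ => hbdd j _) (fun j _ => hbdd j _)
    simp only [Finset.card_univ, Fintype.card_fin] at hprod
    refine hprod.trans ?_
    have hterm : ∀ j : Fin d,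
        |h j (‖A j (x₁ k j) - A j (x₂ l j)‖ ^ 2) - h j (‖x₁ k j - x₂ l j‖ ^ 2)|
          ≤ LK * (ε * (4 * B ^ 2)) := by
      intro j
      refine (hLip j _ _).trans ?_
      have hnd : ‖x₁ k j - x₂ l j‖ ≤ 2 * B := by
        calc ‖x₁ k j - x₂ l j‖ ≤ ‖x₁ k j‖ + ‖x₂ l j‖ := norm_sub_le _ _
          _ ≤ 2 * B := by have := h1 k j; have := h2 l j; linarith
      have hnd2 : ‖x₁ k j - x₂ l j‖ ^ 2 ≤ 4 * B ^ 2 := by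
        nlinarith [norm_nonneg (x₁ k j - x₂ l j)]
      have habs : |‖A j (x₁ k j) - A j (x₂ l j)‖ ^ 2 - ‖x₁ k j - x₂ l j‖ ^ 2|
          ≤ ε * (4 * B ^ 2) :=
        (hproj j k l).trans (by nlinarith)
      exact mul_le_mul_of_nonneg_left habs hLK
    have hsum : (∑ j : Fin d,
          |h j (‖A j (x₁ k j) - A j (x₂ l j)‖ ^ 2) - h j (‖x₁ k j - x₂ l j‖ ^ 2)|)
        ≤ (d : ℝ) * (LK * (ε * (4 * B ^ 2))) := by
      calc (∑ j : Fin d,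
            |h j (‖A j (x₁ k j) - A j (x₂ l j)‖ ^ 2) - h j (‖x₁ k j - x₂ l j‖ ^ 2)|)
          ≤ ∑ _j : Fin d, LK * (ε * (4 * B ^ 2)) :=
            Finset.sum_le_sum fun j _ => hterm j
        _ = (d : ℝ) * (LK * (ε * (4 * B ^ 2))) := by
            rw [Finset.sum_const, Finset.card_univ, Fintype.card_fin]; simp [nsmul_eq_mul]
    calc M ^ (d - 1) * ∑ j : Fin d,
          |h j (‖A j (x₁ k j) - A j (x₂ l j)‖ ^ 2) - h j (‖x₁ k j - x₂ l j‖ ^ 2)|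
        ≤ M ^ (d - 1) * ((d : ℝ) * (LK * (ε * (4 * B ^ 2)))) :=
          mul_le_mul_of_nonneg_left hsum hMd
      _ = C := by rw [hC]; ring
  have habs2 : |(∑ k : Fin r, ∑ l : Fin r, ∏ j, h j (‖A j (x₁ k j) - A j (x₂ l j)‖ ^ 2)) -
      ∑ k : Fin r, ∑ l : Fin r, ∏ j, h j (‖x₁ k j - x₂ l j‖ ^ 2)|
      ≤ ∑ k : Fin r, ∑ l : Fin r, C := by
    rw [← Finset.sum_sub_distrib]
    refine (Finset.abs_sum_le_sum_abs _ _).trans (Finset.sum_le_sum fun k _ => ?_)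
    rw [← Finset.sum_sub_distrib]
    refine (Finset.abs_sum_le_sum_abs _ _).trans (Finset.sum_le_sum fun l _ => ?_)
    exact term_bound k l
  refine habs2.trans ?_
  rw [Finset.sum_const, Finset.sum_const, Finset.card_univ, Fintype.card_fin,
    smul_smul, nsmul_eq_mul, hC]
  push_cast
  ring_nf
  exact le_refl _
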